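/- Let α, β be real numbers with α < β. Then for every t ∈ ℝ, ∫_{−∞}^{∞} θ_{[α,β]}(t+s) / (2 e^{|s|}) ds = θ_{[α,β]}(t) + e^{−|α−t|}/2 − e^{−|β−t|}/2; in other words the integral on the left equals Θ_{[α,β]}(t). -/

import Mathlib

open MeasureTheory

/-- The clipping function `θ_{[α,β]}(t) = max(α, min(β, t))`. -/
noncomputable def thetaClip (α β t : ℝ) : ℝ := max α (min β t)

/-- The smoothed clipping function
`Θ_{[α,β]}(t) = θ_{[α,β]}(t) + e^{-|α-t|}/2 - e^{-|β-t|}/2`. -/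
noncomputable def ThetaClip (α β t : ℝ) : ℝ :=
  thetaClip α β t + Real.exp (-|α - t|) / 2 - Real.exp (-|β - t|) / 2

/-!
For `α ≤ β` the clip is an affine combination of absolute values,
`θ(x) = (α + β)/2 + (|α - x| - |β - x|)/2`, so by linearity it suffices to smooth `|·|`
against the Laplace kernel: `∫ |c - s| e^{-|s|} ds = 2|c| + 2e^{-|c|}`. By the symmetry
`s ↦ -s` we may take `c ≥ 0`; then `|c - s| = (c - s) + 2 (s - c)⁺`, the odd part `s e^{-|s|}`
integrates to zero, and the ramp contributes `2 ∫_c^∞ (s - c) e^{-s} ds = 2e^{-c}`.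
-/

open Set Filter Real
open scoped Topology

theorem integrable_comp_abs {E : Type*} [NormedAddCommGroup E] {f : ℝ → E}
    (hf : IntegrableOn f (Ioi 0)) : Integrable fun x => f |x| := by
  have hf' : IntegrableOn f (Ici (-0)) := by
    rw [neg_zero]
    exact (integrableOn_Ici_iff_integrableOn_Ioi enorm_ne_top).mpr hf
  have hneg : IntegrableOn (fun x => f |x|) (Iic 0) :=
    hf'.comp_neg_Iic.congr_fun (fun x hx => by rw [abs_of_nonpos hx]) measurableSet_Iic
  have hpos : IntegrableOn (fun x => f |x|) (Ioi 0) :=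
    hf.congr_fun (fun x hx => by rw [abs_of_pos hx]) measurableSet_Ioi
  simpa [Iic_union_Ioi] using hneg.union hpos

theorem hasDerivAt_neg_sub_add_one_mul_exp_neg (c x : ℝ) :
    HasDerivAt (fun s => -(s - c + 1) * exp (-s)) ((x - c) * exp (-x)) x :=
  (((hasDerivAt_id x).sub_const c).add_const 1).fun_neg.fun_mul (hasDerivAt_neg x).exp
    |>.congr_deriv (by simp only [id]; ring)

theorem tendsto_neg_sub_add_one_mul_exp_neg_atTop (c : ℝ) :
    Tendsto (fun s => -(s - c + 1) * exp (-s)) atTop (𝓝 0) := by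
  have h1 := tendsto_pow_mul_exp_neg_atTop_nhds_zero 1
  have h0 := (tendsto_pow_mul_exp_neg_atTop_nhds_zero 0).const_mul (1 - c)
  simp only [pow_one, pow_zero, one_mul, mul_zero] at h1 h0
  convert (h1.add h0).neg using 2 <;> ring

theorem integrableOn_Ioi_sub_mul_exp_neg (c : ℝ) :
    IntegrableOn (fun s => (s - c) * exp (-s)) (Ioi c) :=
  integrableOn_Ioi_deriv_of_nonneg' (fun x _ => hasDerivAt_neg_sub_add_one_mul_exp_neg c x)
    (fun _ hx => mul_nonneg (sub_nonneg.mpr (le_of_lt hx)) (exp_pos _).le)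
    (tendsto_neg_sub_add_one_mul_exp_neg_atTop c)

theorem integral_Ioi_sub_mul_exp_neg (c : ℝ) :
    ∫ s in Ioi c, (s - c) * exp (-s) = exp (-c) := by
  rw [integral_Ioi_of_hasDerivAt_of_nonneg'
    (fun x _ => hasDerivAt_neg_sub_add_one_mul_exp_neg c x)
    (fun _ hx => mul_nonneg (sub_nonneg.mpr (le_of_lt hx)) (exp_pos _).le)
    (tendsto_neg_sub_add_one_mul_exp_neg_atTop c)]
  ring

theorem integrable_exp_neg_abs : Integrable fun s : ℝ => exp (-|s|) :=
  integrable_comp_abs (f := fun s => exp (-s)) (by simpa using exp_neg_integrableOn_Ioi 0 one_pos)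

theorem integral_exp_neg_abs : ∫ s : ℝ, exp (-|s|) = 2 := by
  rw [integral_comp_abs (f := fun s => exp (-s)), integral_exp_neg_Ioi_zero, mul_one]

theorem integrable_abs_mul_exp_neg_abs : Integrable fun s : ℝ => |s| * exp (-|s|) :=
  integrable_comp_abs (f := fun s => s * exp (-s))
    (by simpa using integrableOn_Ioi_sub_mul_exp_neg 0)

theorem integrable_mul_exp_neg_abs : Integrable fun s : ℝ => s * exp (-|s|) := by
  refine integrable_abs_mul_exp_neg_abs.mono' (by fun_prop) (.of_forall fun s => ?_)
  rw [norm_mul, norm_of_nonneg (exp_pos _).le, norm_eq_abs]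

theorem integral_mul_exp_neg_abs : ∫ s : ℝ, s * exp (-|s|) = 0 := by
  have h := integral_neg_eq_self (fun s : ℝ => s * exp (-|s|)) volume
  simp only [abs_neg, neg_mul, integral_neg] at h
  linarith

theorem integrable_abs_sub_mul_exp_neg_abs (c : ℝ) :
    Integrable fun s : ℝ => |c - s| * exp (-|s|) := by
  refine ((integrable_exp_neg_abs.const_mul |c|).add integrable_abs_mul_exp_neg_abs).mono'
    (by fun_prop) (.of_forall fun s => ?_)
  rw [Pi.add_apply, norm_mul, norm_of_nonneg (exp_pos _).le, norm_of_nonneg (abs_nonneg _),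
    ← add_mul]
  gcongr
  exact abs_sub _ _

theorem integral_abs_sub_mul_exp_neg_abs_of_nonneg {c : ℝ} (hc : 0 ≤ c) :
    ∫ s : ℝ, |c - s| * exp (-|s|) = 2 * c + 2 * exp (-c) := by
  have hsplit : (fun s : ℝ => |c - s| * exp (-|s|)) = fun s =>
      c * exp (-|s|) - s * exp (-|s|) + 2 * (Ioi c).indicator (fun s => (s - c) * exp (-s)) s := by
    ext s
    by_cases hs : s ∈ Ioi c
    · rw [indicator_of_mem hs, abs_of_neg (sub_neg.mpr hs), abs_of_pos (hc.trans_lt hs)]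
      ring
    · rw [indicator_of_notMem hs, abs_of_nonneg (sub_nonneg.mpr (not_lt.mp hs))]
      ring
  rw [hsplit, integral_add, integral_sub, integral_const_mul, integral_const_mul,
    integral_indicator measurableSet_Ioi, integral_exp_neg_abs, integral_mul_exp_neg_abs,
    integral_Ioi_sub_mul_exp_neg]
  · ring
  · exact integrable_exp_neg_abs.const_mul c
  · exact integrable_mul_exp_neg_abs
  · exact (integrable_exp_neg_abs.const_mul c).sub integrable_mul_exp_neg_abs
  · exact ((integrable_indicator_iff measurableSet_Ioi).mpr
      (integrableOn_Ioi_sub_mul_exp_neg c)).const_mul 2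

theorem integral_abs_sub_mul_exp_neg_abs (c : ℝ) :
    ∫ s : ℝ, |c - s| * exp (-|s|) = 2 * |c| + 2 * exp (-|c|) := by
  rcases le_total 0 c with hc | hc
  · rw [abs_of_nonneg hc, integral_abs_sub_mul_exp_neg_abs_of_nonneg hc]
  · rw [abs_of_nonpos hc, ← integral_abs_sub_mul_exp_neg_abs_of_nonneg (neg_nonneg.mpr hc),
      ← integral_neg_eq_self]
    congr 1 with s
    rw [abs_neg, ← abs_neg (c - -s)]
    ring_nf

theorem thetaClip_eq_abs_sub_abs (α β : ℝ) (h : α ≤ β) (x : ℝ) :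
    thetaClip α β x = (α + β) / 2 + (|α - x| - |β - x|) / 2 := by
  unfold thetaClip
  rcases le_total x α with hxα | hαx
  · rw [max_eq_left (min_le_right _ _ |>.trans hxα), abs_of_nonneg (sub_nonneg.mpr hxα),
      abs_of_nonneg (sub_nonneg.mpr (hxα.trans h))]
    ring
  rcases le_total x β with hxβ | hβx
  · rw [min_eq_right hxβ, max_eq_right hαx, abs_of_nonpos (sub_nonpos.mpr hαx),
      abs_of_nonneg (sub_nonneg.mpr hxβ)]
    ring
  · rw [min_eq_left hβx, max_eq_right h, abs_of_nonpos (sub_nonpos.mpr hαx),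
      abs_of_nonpos (sub_nonpos.mpr hβx)]
    ring

/-- Lemma 6.3(1): `Θ_{[α,β]}(t) = ∫_{-∞}^{∞} θ_{[α,β]}(t+s) / (2 e^{|s|}) ds`. -/
theorem thetaClip_integral (α β : ℝ) (h : α < β) (t : ℝ) :
    ∫ s : ℝ, thetaClip α β (t + s) / (2 * Real.exp |s|) = ThetaClip α β t := by
  have hθ : ∀ s, thetaClip α β (t + s) / (2 * exp |s|) = ((α + β) * exp (-|s|)
      + |α - t - s| * exp (-|s|) - |β - t - s| * exp (-|s|)) / 4 := fun s => by
    rw [thetaClip_eq_abs_sub_abs α β h.le, exp_neg, sub_add_eq_sub_sub, sub_add_eq_sub_sub]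
    field_simp
    ring
  have hα := integrable_abs_sub_mul_exp_neg_abs (α - t)
  have hβ := integrable_abs_sub_mul_exp_neg_abs (β - t)
  have hk := integrable_exp_neg_abs.const_mul (α + β)
  simp_rw [hθ]
  rw [integral_div, integral_sub, integral_add hk hα, integral_const_mul,
    integral_exp_neg_abs, integral_abs_sub_mul_exp_neg_abs, integral_abs_sub_mul_exp_neg_abs,
    ThetaClip, thetaClip_eq_abs_sub_abs α β h.le]
  · ring
  · exact hk.add hα
  · exact hβ
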